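/- arXiv:1709.05135 — 4 statements merged into one kernel-verified Lean document; each statement's English description precedes it below -/
import Mathlib

section
/- Under the setting of the incremental Cholesky update: with d_i² = L_{ii} − ‖c_i‖² and e_i = (L_{ji} − ⟨c_j,c_i⟩)/d_j, the updated quantity d_i'² := L_{ii} − ‖c_i‖² − e_i² satisfies d_i'² = det(L_{Y∪{j}∪{i}})/det(L_{Y∪{j}}), i.e., the update d_i'² = d_i² − e_i² correctly computes the new determinant ratio. -/
/-!
Appending the row `(c_jᵀ, d_j)` to the Cholesky factor `V` of `L_Y` gives a Cholesky factor `W`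
of `A = L_{Y∪{j}}`, and `W u = b` for `u = (c_i, e_i)`, where `b` is the column of `L` at `i`
restricted to `Y ∪ {j}`. The determinant ratio is the Schur complement `L_ii - bᵀ A⁻¹ b`, and
`bᵀ (W Wᵀ)⁻¹ b = ‖W⁻¹ b‖² = ‖u‖²`.
-/
open Matrix

/-- Principal submatrix of `L` indexed by the finite set `Y`. -/
def pSub {M : ℕ} (L : Matrix (Fin M) (Fin M) ℝ) (Y : Finset (Fin M)) :
    Matrix Y Y ℝ := Matrix.of fun a b => L a.1 b.1

/-- The principal submatrix on `Y ∪ {j}`, with `j` ordered last. -/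
def pSubExt {M : ℕ} (L : Matrix (Fin M) (Fin M) ℝ) (Y : Finset (Fin M)) (j : Fin M) :
    Matrix (Y ⊕ Unit) (Y ⊕ Unit) ℝ :=
  Matrix.fromBlocks (pSub L Y) (Matrix.of fun (a : Y) (_ : Unit) => L a.1 j)
    (Matrix.of fun (_ : Unit) (a : Y) => L j a.1)
    (Matrix.of fun (_ _ : Unit) => L j j)

namespace Matrix

variable {R : Type*} [CommRing R] {n : Type*} [Fintype n] [DecidableEq n]

theorem det_fromBlocks_replicateCol_replicateRow {A : Matrix n n R} (hA : IsUnit A.det)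
    (b : n → R) (c : R) :
    (fromBlocks A (replicateCol Unit b) (replicateRow Unit b) (of fun _ _ => c)).det
      = A.det * (c - b ⬝ᵥ (A⁻¹ *ᵥ b)) := by
  let := A.invertibleOfIsUnitDet hA
  rw [det_fromBlocks₁₁, invOf_eq_nonsing_inv, det_unique (n := Unit), dotProduct_mulVec]
  simp [mul_apply, vecMul, dotProduct]

theorem mulVec_dotProduct_inv_mulVec_mulVec {A W : Matrix n n R} (hA : A = W * Wᵀ)
    (hW : IsUnit W.det) (u : n → R) :
    (W *ᵥ u) ⬝ᵥ (A⁻¹ *ᵥ (W *ᵥ u)) = u ⬝ᵥ u := by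
  rw [hA, mul_inv_rev, mulVec_mulVec, Matrix.mul_assoc, nonsing_inv_mul W hW,
    Matrix.mul_one, dotProduct_mulVec, vecMul_mulVec, ← transpose_nonsing_inv, ← transpose_mul,
    nonsing_inv_mul W hW, transpose_one, vecMul_one]

variable {m : Type*} [Fintype m]

def cholExtend (V : Matrix m m R) (c : m → R) (d : R) : Matrix (m ⊕ Unit) (m ⊕ Unit) R :=
  fromBlocks V 0 (replicateRow Unit c) (of fun _ _ => d)

theorem cholExtend_mul_transpose (V : Matrix m m R) (c : m → R) (d : R) :
    cholExtend V c d * (cholExtend V c d)ᵀ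
      = fromBlocks (V * Vᵀ) (replicateCol Unit (V *ᵥ c)) (replicateRow Unit (V *ᵥ c))
          (of fun _ _ => c ⬝ᵥ c + d * d) := by
  rw [cholExtend, fromBlocks_transpose, fromBlocks_multiply]
  congr 1 <;> ext <;> simp [mul_apply, mulVec, dotProduct, mul_comm]

theorem cholExtend_mulVec_sumElim (V : Matrix m m R) (c x : m → R) (d y : R) :
    cholExtend V c d *ᵥ Sum.elim x (fun _ => y)
      = Sum.elim (V *ᵥ x) (fun _ => c ⬝ᵥ x + d * y) := by
  rw [cholExtend, fromBlocks_mulVec]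
  congr 1 <;> ext <;> simp [mulVec, dotProduct]

end Matrix

theorem pSubExt_eq_cholExtend_mul_transpose {M : ℕ} {L : Matrix (Fin M) (Fin M) ℝ}
    (hL : L.IsSymm) {Y : Finset (Fin M)} {V : Matrix Y Y ℝ} (hChol : pSub L Y = V * Vᵀ)
    {j : Fin M} {c : Y → ℝ} (hc : V *ᵥ c = fun a : Y => L a.1 j) {d : ℝ}
    (hd : d ^ 2 = L j j - ∑ a : Y, c a ^ 2) :
    pSubExt L Y j = cholExtend V c d * (cholExtend V c d)ᵀ := by
  rw [cholExtend_mul_transpose, hc, ← hChol, pSubExt]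
  congr 1
  · ext; exact hL.apply _ _
  · ext; simp [dotProduct, ← sq, hd]

theorem d2_update_eq_det_ratio_general
    {M : ℕ} (L : Matrix (Fin M) (Fin M) ℝ) (hL : L.PosSemidef)
    (Y : Finset (Fin M))
    (V : Matrix Y Y ℝ)
    (hChol : pSub L Y = V * Vᵀ)
    (i j : Fin M)
    (ci cj : Y → ℝ)
    (hci : V.mulVec ci = fun a : Y => L a.1 i)
    (hcj : V.mulVec cj = fun a : Y => L a.1 j)
    (dj : ℝ) (hdjpos : 0 < dj)
    (hdj : dj ^ 2 = L j j - ∑ a : Y, (cj a) ^ 2)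
    (hdetYj : 0 < (pSubExt L Y j).det)
    (ei : ℝ) (hei : ei = (L j i - ∑ a : Y, cj a * ci a) / dj) :
    L i i - ∑ a : Y, (ci a) ^ 2 - ei ^ 2
      = (Matrix.fromBlocks (pSubExt L Y j)
          (Matrix.of fun (a : Y ⊕ Unit) (_ : Unit) =>
            Sum.elim (fun y : Y => L y.1 i) (fun _ => L j i) a)
          (Matrix.of fun (_ : Unit) (a : Y ⊕ Unit) =>
            Sum.elim (fun y : Y => L i y.1) (fun _ => L i j) a)
          (Matrix.of fun (_ _ : Unit) => L i i)).det / (pSubExt L Y j).det := by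
  have hsymm : L.IsSymm := by simpa [conjTranspose_eq_transpose_of_trivial] using hL.1
  set A := pSubExt L Y j
  set W := cholExtend V cj dj
  have hA : A = W * Wᵀ := pSubExt_eq_cholExtend_mul_transpose hsymm hChol hcj hdj
  have hAdet : IsUnit A.det := hdetYj.ne'.isUnit
  have hWdet : IsUnit W.det := by
    rw [hA, det_mul, det_transpose] at hAdet
    exact isUnit_of_mul_isUnit_left hAdet
  have hWu : W *ᵥ Sum.elim ci (fun _ => ei)
      = Sum.elim (fun y : Y => L y.1 i) (fun _ => L j i) := by
    rw [cholExtend_mulVec_sumElim, hci, hei, mul_div_cancel₀ _ hdjpos.ne']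
    simp [dotProduct]
  have hrow : (Matrix.of fun (_ : Unit) (a : Y ⊕ Unit) =>
      Sum.elim (fun y : Y => L i y.1) (fun _ => L i j) a)
      = replicateRow Unit (Sum.elim (fun y : Y => L y.1 i) (fun _ => L j i)) := by
    ext _ (a | _) <;> exact hsymm.apply _ _
  rw [hrow, ← hWu, ← replicateCol, det_fromBlocks_replicateCol_replicateRow hAdet,
    mulVec_dotProduct_inv_mulVec_mulVec hA hWdet, mul_div_cancel_left₀ _ hdetYj.ne']
  simp only [dotProduct, Fintype.sum_sum_type, Sum.elim_inl, Sum.elim_inr, Fintype.sum_unique, sq]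
  ring

theorem d2_update_eq_det_ratio
    {M : ℕ} (L : Matrix (Fin M) (Fin M) ℝ) (hL : L.PosSemidef)
    (Y : Finset (Fin M)) (hY : 0 < (pSub L Y).det)
    (V : Matrix Y Y ℝ)
    (hVlow : ∀ a b : Y, (a : Fin M) < (b : Fin M) → V a b = 0)
    (hVinv : IsUnit V.det)
    (hChol : pSub L Y = V * Vᵀ)
    (i j : Fin M) (hi : i ∉ Y) (hj : j ∉ Y) (hij : i ≠ j)
    (ci cj : Y → ℝ)
    (hci : V.mulVec ci = fun a : Y => L a.1 i)
    (hcj : V.mulVec cj = fun a : Y => L a.1 j)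
    (dj : ℝ) (hdjpos : 0 < dj)
    (hdj : dj ^ 2 = L j j - ∑ a : Y, (cj a) ^ 2)
    (hdetYj : 0 < (pSubExt L Y j).det)
    (ei : ℝ) (hei : ei = (L j i - ∑ a : Y, cj a * ci a) / dj) :
    L i i - ∑ a : Y, (ci a) ^ 2 - ei ^ 2
      = (Matrix.fromBlocks (pSubExt L Y j)
          (Matrix.of fun (a : Y ⊕ Unit) (_ : Unit) =>
            Sum.elim (fun y : Y => L y.1 i) (fun _ => L j i) a)
          (Matrix.of fun (_ : Unit) (a : Y ⊕ Unit) =>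
            Sum.elim (fun y : Y => L i y.1) (fun _ => L i j) a)
          (Matrix.of fun (_ _ : Unit) => L i i)).det / (pSubExt L Y j).det :=
  d2_update_eq_det_ratio_general L hL Y V hChol i j ci cj hci hcj dj hdjpos hdj hdetYj ei hei
end

section
/- Let A be an n×n symmetric positive definite matrix with Cholesky factorization A = V Vᵀ (V lower triangular with positive diagonal), and let v ∈ ℝⁿ. Then A + v vᵀ is positive definite and its Cholesky factor V' satisfies: V'₁₁ = sqrt(V₁₁² + v₁²), V'_{2:,1} = (V_{2:,1} V₁₁ + v_{2:} v₁)/V'₁₁, and the trailing block satisfies V'_{2:} V'_{2:}ᵀ = V_{2:} V_{2:}ᵀ + v' v'ᵀ with v' = (v_{2:} V'₁₁ − V'_{2:,1} v₁)/V₁₁. -/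
/-!
Expanding `V * Vᵀ` along the first column of a lower-triangular `V` separates the Cholesky
relations `V' * V'ᵀ = V * Vᵀ + v vᵀ` into the `(1,1)` entry, the first column and the trailing
block. The first two give `V'₁₁` and `V'_{2:,1}`. On the trailing block, the pair
`(V'_{2:,1}, v')` is the image of `(V_{2:,1}, v_{2:})` under the plane rotation with cosine
`V₁₁ / V'₁₁` and sine `v₁ / V'₁₁`, which preserves the sum of the two outer products.
-/

open Matrix

namespace Matrix

variable {R : Type*} [CommRing R] {n : ℕ}

theorem mul_transpose_self_apply_zero_right (W : Matrix (Fin (n + 1)) (Fin (n + 1)) R)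
    (hW : ∀ m : Fin n, W 0 m.succ = 0) (i : Fin (n + 1)) :
    (W * Wᵀ) i 0 = W i 0 * W 0 0 := by
  simp [mul_apply, Fin.sum_univ_succ, hW]

theorem submatrix_succ_mul_transpose_self {m : ℕ} (W : Matrix (Fin (m + 1)) (Fin (n + 1)) R) :
    (W * Wᵀ).submatrix Fin.succ Fin.succ
      = vecMulVec (fun k => W k.succ 0) (fun k => W k.succ 0)
        + W.submatrix Fin.succ Fin.succ * (W.submatrix Fin.succ Fin.succ)ᵀ := by
  ext k l
  simp [mul_apply, Fin.sum_univ_succ, vecMulVec_apply]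

end Matrix

theorem vecMulVec_add_vecMulVec_eq_of_rotation {K ι : Type*} [Field K] {a b s : K}
    (ha : a ≠ 0) (hb : b ^ 2 = a ^ 2 + s ^ 2) {c c' w u : ι → K}
    (hc' : ∀ k, c' k * b = c k * a + w k * s) (hu : ∀ k, u k = (w k * b - c' k * s) / a) :
    vecMulVec c c + vecMulVec w w = vecMulVec c' c' + vecMulVec u u := by
  ext k l
  simp only [Matrix.add_apply, vecMulVec_apply, hu]
  field_simp
  linear_combination (c' k * c' l - w k * w l) * hb - (a * c l) * hc' k
    - (b * c' k - s * w k) * hc' l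

theorem rank_one_cholesky_update
    {n : ℕ} (A : Matrix (Fin (n + 1)) (Fin (n + 1)) ℝ) (hA : A.PosDef)
    (V : Matrix (Fin (n + 1)) (Fin (n + 1)) ℝ)
    (hVlow : ∀ i j : Fin (n + 1), i < j → V i j = 0)
    (hVdiag : ∀ i, 0 < V i i)
    (hChol : A = V * Vᵀ)
    (v : Fin (n + 1) → ℝ)
    (V' : Matrix (Fin (n + 1)) (Fin (n + 1)) ℝ)
    (hV'low : ∀ i j : Fin (n + 1), i < j → V' i j = 0)
    (hV'diag : ∀ i, 0 < V' i i)
    (hChol' : A + Matrix.vecMulVec v v = V' * V'ᵀ)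
    (v' : Fin n → ℝ)
    (hv' : ∀ k : Fin n, v' k = (v k.succ * V' 0 0 - V' k.succ 0 * v 0) / V 0 0) :
    (A + Matrix.vecMulVec v v).PosDef
    ∧ V' 0 0 = Real.sqrt ((V 0 0) ^ 2 + (v 0) ^ 2)
    ∧ (∀ k : Fin n, V' k.succ 0 = (V k.succ 0 * V 0 0 + v k.succ * v 0) / V' 0 0)
    ∧ (Matrix.of fun k l : Fin n => V' k.succ l.succ)
        * (Matrix.of fun k l : Fin n => V' k.succ l.succ)ᵀ
      = (Matrix.of fun k l : Fin n => V k.succ l.succ)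
          * (Matrix.of fun k l : Fin n => V k.succ l.succ)ᵀ
        + Matrix.vecMulVec v' v' := by
  have hupdate : V' * V'ᵀ = V * Vᵀ + vecMulVec v v := by rw [← hChol', hChol]
  have hV0 : ∀ m : Fin n, V 0 m.succ = 0 := fun m => hVlow 0 m.succ m.succ_pos
  have hV'0 : ∀ m : Fin n, V' 0 m.succ = 0 := fun m => hV'low 0 m.succ m.succ_pos
  have hcorner : V' 0 0 ^ 2 = V 0 0 ^ 2 + v 0 ^ 2 := by
    have h := congrFun (congrFun hupdate 0) 0
    simp only [Matrix.add_apply, mul_transpose_self_apply_zero_right _ hV0,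
      mul_transpose_self_apply_zero_right _ hV'0, vecMulVec_apply] at h
    linear_combination h
  have hcolumn : ∀ k : Fin n, V' k.succ 0 * V' 0 0 = V k.succ 0 * V 0 0 + v k.succ * v 0 := by
    intro k
    have h := congrFun (congrFun hupdate k.succ) 0
    simpa only [Matrix.add_apply, mul_transpose_self_apply_zero_right _ hV0,
      mul_transpose_self_apply_zero_right _ hV'0, vecMulVec_apply] using h
  have hrotation := vecMulVec_add_vecMulVec_eq_of_rotation (hVdiag 0).ne' hcorner hcolumn hv'
  have htrailing := congrArg (·.submatrix Fin.succ Fin.succ) hupdate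
  simp only [submatrix_succ_mul_transpose_self, submatrix_add, Pi.add_apply] at htrailing
  change _ = _ + vecMulVec (fun k : Fin n => v k.succ) (fun k : Fin n => v k.succ) at htrailing
  refine ⟨hA.add_posSemidef (by simpa using posSemidef_vecMulVec_self_star v),
    by rw [← Real.sqrt_sq (hV'diag 0).le, hcorner],
    fun k => (eq_div_iff (hV'diag 0).ne').2 (hcolumn k), ?_⟩
  rw [add_right_comm, hrotation, add_assoc, add_comm (vecMulVec v' v')] at htrailing
  exact add_left_cancel htrailing
end

section
/- Greedy gains are positive exactly up to the rank: in the greedy selection on a positive semidefinite matrix L (jₖ maximizing det(L_{V_{k−1}∪{i}})/det(L_{V_{k−1}})), the gain d_{j_k}² > 0 if and only if k ≤ rank(L). -/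
open Matrix

/-- The greedy gain `d_i² = det(L_{Y∪{i}}) / det(L_Y)`. -/
noncomputable def gainD2 {M : ℕ} (L : Matrix (Fin M) (Fin M) ℝ) (Y : Finset (Fin M)) (i : Fin M) : ℝ :=
  (pSub L (insert i Y)).det / (pSub L Y).det

/-!
For `L = BᴴB` positive semidefinite, `L_W v = 0` forces `B v = 0` and hence `L v = 0` (with `v`
extended by zero off `W`), so the principal submatrix `L_W` is nonsingular exactly when the columns
`L_i`, `i ∈ W`, are linearly independent. Thus a nonsingular `L_W` has `|W| ≤ rank L`, while if
`|W| < rank L` some column lies outside the span of the columns in `W` and the corresponding gain is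
positive. The greedy choice therefore keeps `det L_{V_k} > 0` for all `k ≤ rank L`.
-/

open Module Submodule
open scoped ComplexOrder

theorem Matrix.card_le_rank_of_det_submatrix_ne_zero {n R : Type*} [Fintype n] [DecidableEq n]
    [CommRing R] [IsDomain R] (A : Matrix n n R) {s : Finset n}
    (hs : (A.submatrix ((↑) : s → n) (↑)).det ≠ 0) : s.card ≤ A.rank :=
  calc s.card = (A.submatrix (Subtype.val : s → n) Subtype.val).rank := by
        rw [rank_of_det_ne_zero hs, Fintype.card_coe]
    _ ≤ A.rank := A.rank_submatrix_le _ _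

namespace Matrix.PosSemidef

variable {𝕜 m n : Type*} [RCLike 𝕜] [Fintype m] {A : Matrix n n 𝕜}

open scoped MatrixOrder in
theorem submatrix_mulVec_eq_zero_iff [Fintype n] (hA : A.PosSemidef) (f : m → n) (v : m → 𝕜) :
    A.submatrix f f *ᵥ v = 0 ↔ A.submatrix id f *ᵥ v = 0 := by
  classical
  refine ⟨fun h => ?_, fun h => (congrArg (· ∘ f) h :)⟩
  obtain ⟨B, rfl⟩ := CStarAlgebra.nonneg_iff_eq_star_mul_self.mp hA.nonneg
  set D := B.submatrix id f
  have hff : (star B * B).submatrix f f = Dᴴ * D := by ext; simp [D, mul_apply]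
  have hf : (star B * B).submatrix id f = Bᴴ * D := by ext; simp [D, mul_apply]
  rw [hff, conjTranspose_mul_self_mulVec_eq_zero] at h
  rw [hf, ← mulVec_mulVec, h, mulVec_zero]

theorem det_submatrix_ne_zero_iff [Fintype n] [DecidableEq m] (hA : A.PosSemidef) (f : m → n) :
    (A.submatrix f f).det ≠ 0 ↔ LinearIndependent 𝕜 (A.col ∘ f) := by
  rw [Ne, ← exists_mulVec_eq_zero_iff, show A.col ∘ f = (A.submatrix id f).col from rfl,
    ← mulVec_injective_iff, ← coe_mulVecLin (A.submatrix id f), injective_iff_map_eq_zero]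
  simp only [mulVecLin_apply, hA.submatrix_mulVec_eq_zero_iff, not_exists, not_and]
  exact forall_congr' fun _ => not_imp_not

theorem exists_det_submatrix_insert_ne_zero [Fintype n] [DecidableEq n] (hA : A.PosSemidef)
    {s : Finset n} (hs : (A.submatrix ((↑) : s → n) (↑)).det ≠ 0) (hlt : s.card < A.rank) :
    ∃ i ∉ s, (A.submatrix ((↑) : ↥(insert i s) → n) (↑)).det ≠ 0 := by
  have hind : LinearIndepOn 𝕜 A.col (s : Set n) := (hA.det_submatrix_ne_zero_iff _).mp hs
  obtain ⟨i, hi⟩ : ∃ i, A.col i ∉ span 𝕜 (A.col '' s) := by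
    by_contra! h
    have : A.rank ≤ s.card := calc
      A.rank = finrank 𝕜 (span 𝕜 (Set.range A.col)) := rank_eq_finrank_span_cols A
      _ ≤ finrank 𝕜 (span 𝕜 (A.col '' s)) :=
        finrank_mono (span_le.2 (Set.range_subset_iff.2 h))
      _ ≤ s.card := by
        rw [← Finset.coe_image]
        exact (finrank_span_finset_le_card _).trans Finset.card_image_le
    omega
  have his : i ∉ s := fun h => hi (subset_span ⟨i, h, rfl⟩)
  refine ⟨i, his, (hA.det_submatrix_ne_zero_iff _).mpr ?_⟩
  have := (linearIndepOn_insert his).mpr ⟨hind, hi⟩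
  rwa [← Finset.coe_insert] at this

end Matrix.PosSemidef

theorem Finset.card_eq_of_insert_notMem_chain {α : Type*} [DecidableEq α] {N : ℕ}
    {V : ℕ → Finset α} {j : ℕ → α} (h0 : V 0 = ∅)
    (hsucc : ∀ k, k < N → V (k + 1) = insert (j k) (V k)) (hnot : ∀ k, k < N → j k ∉ V k) :
    ∀ k, k ≤ N → (V k).card = k
  | 0, _ => by simp [h0]
  | k + 1, hk => by
    rw [hsucc k hk, Finset.card_insert_of_notMem (hnot k hk),
      Finset.card_eq_of_insert_notMem_chain h0 hsucc hnot k (Nat.le_of_succ_le hk)]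

section Greedy

variable {M : ℕ} {L : Matrix (Fin M) (Fin M) ℝ}

theorem pSub_eq_submatrix (Y : Finset (Fin M)) :
    pSub L Y = L.submatrix (↑) (↑) :=
  rfl

theorem det_pSub_empty : (pSub L ∅).det = 1 :=
  det_isEmpty

theorem det_pSub_insert {Y : Finset (Fin M)} (hY : (pSub L Y).det ≠ 0) (i : Fin M) :
    (pSub L (insert i Y)).det = gainD2 L Y i * (pSub L Y).det :=
  (div_mul_cancel₀ _ hY).symm

theorem exists_gainD2_pos (hL : L.PosSemidef) {Y : Finset (Fin M)} (hY : 0 < (pSub L Y).det)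
    (hlt : Y.card < L.rank) : ∃ i ∉ Y, 0 < gainD2 L Y i := by
  obtain ⟨i, hi, hdet⟩ := hL.exists_det_submatrix_insert_ne_zero hY.ne' hlt
  exact ⟨i, hi, div_pos ((hL.submatrix _).det_nonneg.lt_of_ne' hdet) hY⟩

theorem card_le_rank_of_gainD2_pos {Y : Finset (Fin M)} {i : Fin M} (h : 0 < gainD2 L Y i) :
    (insert i Y).card ≤ L.rank :=
  L.card_le_rank_of_det_submatrix_ne_zero fun h0 =>
    h.ne' (by rw [gainD2, pSub_eq_submatrix, h0, zero_div])

theorem det_pSub_pos_of_le_rank (hL : L.PosSemidef) {j : ℕ → Fin M} {V : ℕ → Finset (Fin M)}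
    (h0 : V 0 = ∅) (hsucc : ∀ k, k < M → V (k + 1) = insert (j k) (V k))
    (hcard : ∀ k, k ≤ M → (V k).card = k)
    (hgreedy : ∀ k, k < M → ∀ i : Fin M, i ∉ V k → gainD2 L (V k) i ≤ gainD2 L (V k) (j k)) :
    ∀ k, k ≤ M → k ≤ L.rank → 0 < (pSub L (V k)).det := by
  intro k
  induction k with
  | zero => intros; rw [h0, det_pSub_empty]; exact one_pos
  | succ k ih =>
    intro hk hr
    have hV := ih (by omega) (by omega)
    obtain ⟨i, hi, hgain⟩ := exists_gainD2_pos hL hV (by rw [hcard k (by omega)]; omega)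
    rw [hsucc k hk, det_pSub_insert hV.ne']
    exact mul_pos (hgain.trans_le (hgreedy k hk i hi)) hV

end Greedy

theorem greedy_gain_pos_iff_le_rank
    {M : ℕ} (L : Matrix (Fin M) (Fin M) ℝ) (hL : L.PosSemidef)
    (j : ℕ → Fin M) (Vset : ℕ → Finset (Fin M))
    (hV0 : Vset 0 = ∅)
    (hVs : ∀ k, k < M → Vset (k + 1) = insert (j k) (Vset k))
    (hnot : ∀ k, k < M → j k ∉ Vset k)
    (hgreedy : ∀ k, k < M → ∀ i : Fin M, i ∉ Vset k →
      gainD2 L (Vset k) i ≤ gainD2 L (Vset k) (j k)) :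
    ∀ k, k < M → (0 < gainD2 L (Vset k) (j k) ↔ k < L.rank) := by
  have hcard := Finset.card_eq_of_insert_notMem_chain hV0 hVs hnot
  have hdet := det_pSub_pos_of_le_rank hL hV0 hVs hcard hgreedy
  intro k hk
  constructor
  · intro hgain
    have := card_le_rank_of_gainD2_pos hgain
    rw [← hVs k hk, hcard (k + 1) hk] at this
    omega
  · intro hr
    rw [gainD2, ← hVs k hk]
    exact div_pos (hdet (k + 1) hk hr) (hdet k hk.le hr.le)
end

section
/- Let L be positive semidefinite, Y a set with det(L_Y) > 0, and i ∉ Y with det(L_{Y∪{i}}) > 0. Modified marginal gain identity: for θ ∈ [0,1), α = θ/(2(1−θ)), relevance scores r ∈ ℝ^M, and kernel L' = Diag(exp(α r)) · S · Diag(exp(α r)), the quantity log det(L'_{Y∪{i}}) − log det(L'_Y) equals 2α r_i + log det(S_{Y∪{i}}) − log det(S_Y); in particular, maximizing this gain over i is equivalent to maximizing θ r_i + (1−θ)(log det(S_{Y∪{i}}) − log det(S_Y)). -/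
/-!
Principal submatrices commute with diagonal conjugation, so
`det (D S D)_Y = (∏_{j ∈ Y} d_j)^2 det S_Y`; taking logarithms, the factors indexed by `Y`
cancel in the marginal gain and only `2 log d_i = 2 α r_i` survives.
-/

open Matrix

section

variable {M : ℕ} (S : Matrix (Fin M) (Fin M) ℝ)

theorem pSub_diagonal_mul_mul_diagonal (d e : Fin M → ℝ) (Y : Finset (Fin M)) :
    pSub (diagonal d * S * diagonal e) Y
      = diagonal (fun a : Y => d a) * pSub S Y * diagonal (fun a : Y => e a) := by
  ext a b
  simp [pSub, diagonal_mul, mul_diagonal]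

theorem det_pSub_diagonal_mul_mul_diagonal (d e : Fin M → ℝ) (Y : Finset (Fin M)) :
    (pSub (diagonal d * S * diagonal e) Y).det
      = (∏ j ∈ Y, d j) * (∏ j ∈ Y, e j) * (pSub S Y).det := by
  rw [pSub_diagonal_mul_mul_diagonal, det_mul, det_mul, det_diagonal, det_diagonal,
    Finset.prod_coe_sort Y d, Finset.prod_coe_sort Y e]
  ring

theorem log_det_pSub_exp_conj (f : Fin M → ℝ) {Y : Finset (Fin M)}
    (hY : (pSub S Y).det ≠ 0) :
    Real.log (pSub (diagonal (fun j => Real.exp (f j)) * S *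
        diagonal (fun j => Real.exp (f j))) Y).det
      = 2 * ∑ j ∈ Y, f j + Real.log (pSub S Y).det := by
  rw [det_pSub_diagonal_mul_mul_diagonal, ← Real.exp_sum, ← Real.exp_add,
    Real.log_mul (Real.exp_ne_zero _) hY, Real.log_exp]
  ring

theorem log_det_pSub_exp_conj_insert_sub (f : Fin M → ℝ) {Y : Finset (Fin M)} {i : Fin M}
    (hi : i ∉ Y) (hY : (pSub S Y).det ≠ 0) (hYi : (pSub S (insert i Y)).det ≠ 0) :
    Real.log (pSub (diagonal (fun j => Real.exp (f j)) * S *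
          diagonal (fun j => Real.exp (f j))) (insert i Y)).det
        - Real.log (pSub (diagonal (fun j => Real.exp (f j)) * S *
          diagonal (fun j => Real.exp (f j))) Y).det
      = 2 * f i + (Real.log (pSub S (insert i Y)).det - Real.log (pSub S Y).det) := by
  rw [log_det_pSub_exp_conj S f hYi, log_det_pSub_exp_conj S f hY, Finset.sum_insert hi]
  ring

end

theorem modified_marginal_gain_identity_general
    {M : ℕ} (S : Matrix (Fin M) (Fin M) ℝ)
    (r : Fin M → ℝ) (θ : ℝ) (hθ1 : θ < 1)
    (α : ℝ) (hα : α = θ / (2 * (1 - θ)))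
    (L' : Matrix (Fin M) (Fin M) ℝ)
    (hL' : L' = Matrix.diagonal (fun i => Real.exp (α * r i)) * S *
        Matrix.diagonal (fun i => Real.exp (α * r i)))
    (Y : Finset (Fin M)) (i : Fin M) (hi : i ∉ Y)
    (hSY : 0 < (pSub S Y).det) (hSYi : 0 < (pSub S (insert i Y)).det) :
    Real.log (pSub L' (insert i Y)).det - Real.log (pSub L' Y).det
      = 2 * α * r i + (Real.log (pSub S (insert i Y)).det - Real.log (pSub S Y).det)
    ∧ (1 - θ) * (Real.log (pSub L' (insert i Y)).det - Real.log (pSub L' Y).det)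
      = θ * r i
        + (1 - θ) * (Real.log (pSub S (insert i Y)).det - Real.log (pSub S Y).det) := by
  have gain : Real.log (pSub L' (insert i Y)).det - Real.log (pSub L' Y).det
      = 2 * α * r i + (Real.log (pSub S (insert i Y)).det - Real.log (pSub S Y).det) := by
    rw [hL', log_det_pSub_exp_conj_insert_sub S (fun j => α * r j) hi hSY.ne' hSYi.ne', mul_assoc]
  have weight : (1 - θ) * (2 * α) = θ := by
    rw [hα]
    field_simp [(sub_pos.mpr hθ1).ne']
  refine ⟨gain, ?_⟩
  rw [gain]
  linear_combination r i * weight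

theorem modified_marginal_gain_identity
    {M : ℕ} (S : Matrix (Fin M) (Fin M) ℝ) (hS : S.PosSemidef)
    (r : Fin M → ℝ) (θ : ℝ) (hθ0 : 0 ≤ θ) (hθ1 : θ < 1)
    (α : ℝ) (hα : α = θ / (2 * (1 - θ)))
    (L' : Matrix (Fin M) (Fin M) ℝ)
    (hL' : L' = Matrix.diagonal (fun i => Real.exp (α * r i)) * S *
        Matrix.diagonal (fun i => Real.exp (α * r i)))
    (Y : Finset (Fin M)) (i : Fin M) (hi : i ∉ Y)
    (hSY : 0 < (pSub S Y).det) (hSYi : 0 < (pSub S (insert i Y)).det) :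
    Real.log (pSub L' (insert i Y)).det - Real.log (pSub L' Y).det
      = 2 * α * r i + (Real.log (pSub S (insert i Y)).det - Real.log (pSub S Y).det)
    ∧ (1 - θ) * (Real.log (pSub L' (insert i Y)).det - Real.log (pSub L' Y).det)
      = θ * r i
        + (1 - θ) * (Real.log (pSub S (insert i Y)).det - Real.log (pSub S Y).det) :=
  modified_marginal_gain_identity_general S r θ hθ1 α hα L' hL' Y i hi hSY hSYi
end
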